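/- For any infinite sequence X over a finite alphabet Σ with |Σ| ≥ 2, any d ≥ 1, and any j ∈ {0,1,…,d−1}: dim_FS(A_{d,j}) ≥ dim_FS^{{A_{d,k} : k ≠ j}}(A_{d,j}) ≥ d·( dim_FS(X) − (d−1)/d ). -/

import Mathlib

open Filter

/-- A finite-state gambler over alphabet `α` with state space `Fin (m+1)`. -/
structure FSG (α : Type) [Fintype α] (m : ℕ) where
  δ : Fin (m + 1) → α → Fin (m + 1)
  bet : Fin (m + 1) → α → ℚ
  bet_nonneg : ∀ q a, 0 ≤ bet q a
  bet_sum : ∀ q, ∑ a, bet q a = 1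
  q₀ : Fin (m + 1)

namespace FSG

variable {α : Type} [Fintype α] {m : ℕ}

/-- The state reached after reading the first `n` symbols of `X`. -/
def state (G : FSG α m) (X : ℕ → α) : ℕ → Fin (m + 1)
  | 0 => G.q₀
  | n + 1 => G.δ (G.state X n) (X n)

/-- The value of the `s`-gale of `G` on the prefix `X[:n]`. -/
noncomputable def capital (G : FSG α m) (s : ℝ) (X : ℕ → α) : ℕ → ℝ
  | 0 => 1
  | n + 1 => (Fintype.card α : ℝ) ^ s * (G.bet (G.state X n) (X n) : ℝ) * G.capital s X n

/-- The `s`-gale of `G` succeeds on `X` : `limsup_n d(X[:n]) = ∞`. -/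
def Succeeds (G : FSG α m) (s : ℝ) (X : ℕ → α) : Prop :=
  ∀ C : ℝ, ∃ n, C < G.capital s X n

/-- The `s`-gale of `G` strongly succeeds on `X` : `liminf_n d(X[:n]) = ∞`. -/
def StrSucceeds (G : FSG α m) (s : ℝ) (X : ℕ → α) : Prop :=
  Tendsto (G.capital s X) atTop atTop

end FSG

/-- Finite-state dimension of a sequence. -/
noncomputable def dimFS {α : Type} [Fintype α] (X : ℕ → α) : ℝ :=
  sInf {s : ℝ | 0 ≤ s ∧ ∃ (m : ℕ) (G : FSG α m), G.Succeeds s X}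

/-- Finite-state strong dimension of a sequence. -/
noncomputable def DimFS {α : Type} [Fintype α] (X : ℕ → α) : ℝ :=
  sInf {s : ℝ | 0 ≤ s ∧ ∃ (m : ℕ) (G : FSG α m), G.StrSucceeds s X}

/-- A finite-state relative gambler over input alphabet `α`, oracle alphabet `β`,
oracle window length `ℓ`, with state space `Fin (m+1)`. -/
structure FSRG (α β : Type) [Fintype α] [Fintype β] (ℓ m : ℕ) where
  δ : Fin (m + 1) → (Fin ℓ → β) → α → Fin (m + 1)
  bet : Fin (m + 1) → (Fin ℓ → β) → α → ℚ
  bet_nonneg : ∀ q y a, 0 ≤ bet q y a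
  bet_sum : ∀ q y, ∑ a, bet q y a = 1
  q₀ : Fin (m + 1)

namespace FSRG

variable {α β : Type} [Fintype α] [Fintype β] {ℓ m : ℕ}

/-- The state reached after reading the first `n` symbols of `X`, with oracle `Y`
(the oracle window at step `i` being `Y[i:i+ℓ]`). -/
def state (G : FSRG α β ℓ m) (Y : ℕ → β) (X : ℕ → α) : ℕ → Fin (m + 1)
  | 0 => G.q₀
  | n + 1 => G.δ (G.state Y X n) (fun j => Y (n + j.val)) (X n)

/-- The value of the `s`-gale of `G` with oracle `Y` on the prefix `X[:n]`. -/
noncomputable def capital (G : FSRG α β ℓ m) (s : ℝ) (Y : ℕ → β) (X : ℕ → α) : ℕ → ℝ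
  | 0 => 1
  | n + 1 =>
      (Fintype.card α : ℝ) ^ s * (G.bet (G.state Y X n) (fun j => Y (n + j.val)) (X n) : ℝ) *
        G.capital s Y X n

/-- Success: `limsup_n d(X[:n]) = ∞`. -/
def Succeeds (G : FSRG α β ℓ m) (s : ℝ) (Y : ℕ → β) (X : ℕ → α) : Prop :=
  ∀ C : ℝ, ∃ n, C < G.capital s Y X n

/-- Strong success: `liminf_n d(X[:n]) = ∞`. -/
def StrSucceeds (G : FSRG α β ℓ m) (s : ℝ) (Y : ℕ → β) (X : ℕ → α) : Prop :=
  Tendsto (G.capital s Y X) atTop atTop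

end FSRG

/-- Finite-state relative dimension `dim_FS^Y(X)`. -/
noncomputable def dimFSRel {α β : Type} [Fintype α] [Fintype β] (X : ℕ → α) (Y : ℕ → β) : ℝ :=
  sInf {s : ℝ | 0 ≤ s ∧ ∃ (ℓ m : ℕ) (G : FSRG α β ℓ m), G.Succeeds s Y X}

/-- Finite-state relative strong dimension `Dim_FS^Y(X)`. -/
noncomputable def DimFSRel {α β : Type} [Fintype α] [Fintype β] (X : ℕ → α) (Y : ℕ → β) : ℝ :=
  sInf {s : ℝ | 0 ≤ s ∧ ∃ (ℓ m : ℕ) (G : FSRG α β ℓ m), G.StrSucceeds s Y X}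

open Classical in
/-- `N(u,x;v,y)`: the number of indices `i < k` such that the `i`-th disjoint block of
length `ℓ` of `X` equals `u` and that of `Y` equals `v`. -/
noncomputable def blockCount {α β : Type} (X : ℕ → α) (Y : ℕ → β) (ℓ k : ℕ)
    (u : Fin ℓ → α) (v : Fin ℓ → β) : ℕ :=
  ((Finset.range k).filter fun i =>
    (∀ j : Fin ℓ, X (i * ℓ + j.val) = u j) ∧ ∀ j : Fin ℓ, Y (i * ℓ + j.val) = v j).card

/-- The `ℓ`-length conditional block entropy `H_ℓ(X[:kℓ] | Y[:kℓ])`.  (Terms with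
`N(u,x;v,y) = 0` vanish since `0 · log 0 = 0` under Mathlib's convention `log 0 = 0`.) -/
noncomputable def condBlockEntropy {α β : Type} [Fintype α] [Fintype β]
    (X : ℕ → α) (Y : ℕ → β) (ℓ k : ℕ) : ℝ :=
  -(1 / (ℓ * Real.log (Fintype.card α))) *
    ∑ v : Fin ℓ → β, ∑ u : Fin ℓ → α,
      ((blockCount X Y ℓ k u v : ℝ) / k) *
        Real.log ((blockCount X Y ℓ k u v : ℝ) /
          ∑ u' : Fin ℓ → α, (blockCount X Y ℓ k u' v : ℝ))

/-- `H_ℓ(X|Y) = liminf_{k → ∞} H_ℓ(X[:kℓ] | Y[:kℓ])`. -/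
noncomputable def relBlockEntropyAt {α β : Type} [Fintype α] [Fintype β]
    (X : ℕ → α) (Y : ℕ → β) (ℓ : ℕ) : ℝ :=
  liminf (fun k => condBlockEntropy X Y ℓ k) atTop

/-- `H(X|Y) = inf_{ℓ ≥ 1} H_ℓ(X|Y)`. -/
noncomputable def relBlockEntropy {α β : Type} [Fintype α] [Fintype β]
    (X : ℕ → α) (Y : ℕ → β) : ℝ :=
  ⨅ ℓ : ℕ, relBlockEntropyAt X Y (ℓ + 1)

/-- `H̄_ℓ(X|Y) = limsup_{k → ∞} H_ℓ(X[:kℓ] | Y[:kℓ])`. -/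
noncomputable def relUpperBlockEntropyAt {α β : Type} [Fintype α] [Fintype β]
    (X : ℕ → α) (Y : ℕ → β) (ℓ : ℕ) : ℝ :=
  limsup (fun k => condBlockEntropy X Y ℓ k) atTop

/-- `H̄(X|Y) = inf_{ℓ ≥ 1} H̄_ℓ(X|Y)`. -/
noncomputable def relUpperBlockEntropy {α β : Type} [Fintype α] [Fintype β]
    (X : ℕ → α) (Y : ℕ → β) : ℝ :=
  ⨅ ℓ : ℕ, relUpperBlockEntropyAt X Y (ℓ + 1)

/-- The arithmetic-progression subsequence `A_{d,a}(X) = X[a] X[a+d] X[a+2d] …`. -/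
def AP {α : Type} (X : ℕ → α) (d a : ℕ) : ℕ → α := fun n => X (a + n * d)

/-- The product sequence of a family of sequences: its `n`-th symbol is the tuple
of the `n`-th symbols. -/
def prodSeq {α ι : Type} (Ys : ι → ℕ → α) : ℕ → ι → α := fun n i => Ys i n

/-- Relative dimension with a finite family of oracle sequences, via the product sequence. -/
noncomputable def dimFSRelFam {α ι : Type} [Fintype α] [Fintype ι] [DecidableEq ι]
    (X : ℕ → α) (Ys : ι → ℕ → α) : ℝ :=
  dimFSRel X (prodSeq Ys)

/-- Relative strong dimension with a finite family of oracle sequences. -/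
noncomputable def DimFSRelFam {α ι : Type} [Fintype α] [Fintype ι] [DecidableEq ι]
    (X : ℕ → α) (Ys : ι → ℕ → α) : ℝ :=
  DimFSRel X (prodSeq Ys)

/-- The interleaving `Y₀ ⊕ ⋯ ⊕ Y_{n-1}`: the `i`-th symbol is `Y_{i mod n}[⌊i/n⌋]`. -/
def interleave {α : Type} {n : ℕ} (hn : 0 < n) (Ys : Fin n → ℕ → α) : ℕ → α :=
  fun i => Ys ⟨i % n, Nat.mod_lt i hn⟩ (i / n)

/-- The interleaving `A ⊕ B` of two sequences. -/
def interleave2 {α : Type} (A B : ℕ → α) : ℕ → α :=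
  fun i => if i % 2 = 0 then A (i / 2) else B (i / 2)

/-!
A finite-state relative `s`-gale `G` on `A_{d,j}`, with window `ℓ`, `m + 1` states and the
other progressions as oracle, is turned into a finite-state gambler on `X` that reads `X` in
blocks of `J` rows of `d` symbols. Within a block it bets the conditional probabilities of a
measure on the block: the symbols at positions `≢ j (mod d)` are uniform, those at positions
`≡ j` follow `G`'s bets, averaged over `G`'s unknown state at the start of the block and over
the oracle symbols up to `ℓ` rows past the block, which have not been read yet. Along `X` this
averaging loses at most a factor `(m + 1) c^{ℓ d}` per block (`c = |Σ|`), so for `J` large the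
`t`-gale of the new gambler after `N d` symbols is at least a constant times the `s`-gale of `G`
after `N` symbols as soon as `t d > s + d - 1`. Hence
`d · dim_FS(X) ≤ dim_FS^{…}(A_{d,j}) + d - 1`. The first inequality holds because a gambler may
ignore its oracle.
-/

open Finset

section Gamblers

variable {α : Type} [Fintype α]

namespace FSG

variable {m : ℕ}

theorem capital_eq_prod (G : FSG α m) (s : ℝ) (X : ℕ → α) (n : ℕ) :
    G.capital s X n =
      ((Fintype.card α : ℝ) ^ s) ^ n * ∏ i ∈ range n, (G.bet (G.state X i) (X i) : ℝ) := by
  induction n with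
  | zero => simp [capital]
  | succ n ih => rw [capital, ih, prod_range_succ, pow_succ]; ring

def run {S : Type} (δ : S → α → S) (q₀ : S) (X : ℕ → α) : ℕ → S
  | 0 => q₀
  | n + 1 => δ (run δ q₀ X n) (X n)

theorem exists_capital_eq_of_automaton {S : Type} [Fintype S] (δ : S → α → S)
    (β : S → α → ℚ) (q₀ : S) (hβ₀ : ∀ q a, 0 ≤ β q a) (hβ₁ : ∀ q, ∑ a, β q a = 1) :
    ∃ (m : ℕ) (G : FSG α m), ∀ s X n, G.capital s X n =
      ((Fintype.card α : ℝ) ^ s) ^ n * ∏ i ∈ range n, (β (run δ q₀ X i) (X i) : ℝ) := by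
  obtain ⟨m, hm⟩ : ∃ m, Fintype.card S = m + 1 :=
    Nat.exists_eq_add_one.mpr (Fintype.card_pos_iff.mpr ⟨q₀⟩)
  let e : S ≃ Fin (m + 1) := Fintype.equivFinOfCardEq hm
  let G : FSG α m := ⟨fun q a => e (δ (e.symm q) a), fun q => β (e.symm q),
    fun q => hβ₀ _, fun q => hβ₁ _, e q₀⟩
  have hstate : ∀ X n, G.state X n = e (run δ q₀ X n) := by
    intro X n
    induction n with
    | zero => rfl
    | succ n ih => simp [state, run, ih, G]
  refine ⟨m, G, fun s X n => ?_⟩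
  simp [capital_eq_prod, hstate, G]

theorem exists_succeeds_two (hα : 2 ≤ Fintype.card α) (X : ℕ → α) :
    ∃ (m : ℕ) (G : FSG α m), G.Succeeds 2 X := by
  have hc : (1 : ℝ) < Fintype.card α := by exact_mod_cast hα
  obtain ⟨m, G, hG⟩ := exists_capital_eq_of_automaton (α := α) (S := Unit) (fun _ _ => ())
    (fun _ _ => (Fintype.card α : ℚ)⁻¹) () (fun _ _ => by positivity)
    (fun _ => by rw [sum_const, card_univ, nsmul_eq_mul, mul_inv_cancel₀ (by positivity)])
  refine ⟨m, G, fun C => ?_⟩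
  obtain ⟨n, hn⟩ := pow_unbounded_of_one_lt C hc
  refine ⟨n, ?_⟩
  rw [hG]
  simp only [prod_const, card_range, Rat.cast_inv, Rat.cast_natCast]
  rw [← mul_pow, Real.rpow_two, sq, mul_inv_cancel_right₀ (by positivity)]
  exact hn

end FSG

namespace FSRG

variable {β : Type} [Fintype β] {ℓ m : ℕ}

def restart (G : FSRG α β ℓ m) (q : Fin (m + 1)) : FSRG α β ℓ m := { G with q₀ := q }

def betAt (G : FSRG α β ℓ m) (Y : ℕ → β) (X : ℕ → α) (i : ℕ) : ℚ :=
  G.bet (G.state Y X i) (fun v => Y (i + v.val)) (X i)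

theorem betAt_nonneg (G : FSRG α β ℓ m) (Y : ℕ → β) (X : ℕ → α) (i : ℕ) :
    0 ≤ G.betAt Y X i :=
  G.bet_nonneg _ _ _

theorem capital_eq_prod (G : FSRG α β ℓ m) (s : ℝ) (Y : ℕ → β) (X : ℕ → α) (n : ℕ) :
    G.capital s Y X n =
      ((Fintype.card α : ℝ) ^ s) ^ n * ∏ i ∈ range n, (G.betAt Y X i : ℝ) := by
  induction n with
  | zero => simp [capital]
  | succ n ih => rw [capital, ih, prod_range_succ, pow_succ, betAt]; ring

theorem betAt_pos_of_succeeds {G : FSRG α β ℓ m} {s : ℝ} {Y : ℕ → β} {X : ℕ → α}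
    (hG : G.Succeeds s Y X) (i : ℕ) : 0 < G.betAt Y X i := by
  refine (G.betAt_nonneg Y X i).lt_of_ne' fun hzero => ?_
  have hnonneg : ∀ n, 0 ≤ G.capital s Y X n := fun n => by
    rw [capital_eq_prod]
    exact mul_nonneg (by positivity) (prod_nonneg fun k _ => by
      exact_mod_cast G.betAt_nonneg Y X k)
  obtain ⟨n, hn⟩ := hG (∑ k ∈ range (i + 1), G.capital s Y X k)
  refine hn.not_ge ?_
  rcases Nat.lt_or_ge i n with hin | hni
  · rw [capital_eq_prod, prod_eq_zero (mem_range.mpr hin) (by simp [hzero]), mul_zero]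
    exact sum_nonneg fun k _ => hnonneg k
  · exact single_le_sum (fun k _ => hnonneg k) (mem_range.mpr (Nat.lt_succ_of_le hni))

theorem state_add (G : FSRG α β ℓ m) (Y : ℕ → β) (X : ℕ → α) (M i : ℕ) :
    G.state Y X (M + i) =
      (G.restart (G.state Y X M)).state (fun n => Y (M + n)) (fun n => X (M + n)) i := by
  induction i with
  | zero => rfl
  | succ i ih => rw [← Nat.add_assoc, state, ih, state]; simp only [Nat.add_assoc]; rfl

theorem betAt_add (G : FSRG α β ℓ m) (Y : ℕ → β) (X : ℕ → α) (M i : ℕ) :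
    G.betAt Y X (M + i) =
      (G.restart (G.state Y X M)).betAt (fun n => Y (M + n)) (fun n => X (M + n)) i := by
  simp only [betAt, state_add, Nat.add_assoc]; rfl

theorem state_congr (G : FSRG α β ℓ m) {Y Y' : ℕ → β} {X X' : ℕ → α} {N : ℕ}
    (hY : ∀ i < N + ℓ, Y i = Y' i) (hX : ∀ i < N, X i = X' i) :
    G.state Y X N = G.state Y' X' N := by
  induction N with
  | zero => rfl
  | succ N ih =>
    have hwin : (fun v : Fin ℓ => Y (N + v.val)) = fun v => Y' (N + v.val) :=
      funext fun v => hY _ (by omega)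
    rw [state, state, ih (fun i hi => hY i (by omega)) (fun i hi => hX i (by omega)), hwin,
      hX N (by omega)]

theorem prod_betAt_congr (G : FSRG α β ℓ m) {Y Y' : ℕ → β} {X X' : ℕ → α} {N : ℕ}
    (hY : ∀ i < N + ℓ, Y i = Y' i) (hX : ∀ i < N, X i = X' i) :
    ∏ i ∈ range N, G.betAt Y X i = ∏ i ∈ range N, G.betAt Y' X' i := by
  refine prod_congr rfl fun i hi => ?_
  have hi : i < N := mem_range.mp hi
  have hwin : (fun v : Fin ℓ => Y (i + v.val)) = fun v => Y' (i + v.val) :=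
    funext fun v => hY _ (by omega)
  rw [betAt, betAt, G.state_congr (fun k hk => hY k (by omega)) (fun k hk => hX k (by omega)),
    hwin, hX i hi]

theorem sum_prod_betAt_update (G : FSRG α β ℓ m) (Y : ℕ → β) (X : ℕ → α) (N : ℕ) :
    ∑ a, ∏ i ∈ range (N + 1), G.betAt Y (Function.update X N a) i =
      ∏ i ∈ range N, G.betAt Y X i := by
  have hX : ∀ a, ∀ i < N, Function.update X N a i = X i := fun a i hi =>
    Function.update_of_ne hi.ne _ _
  simp_rw [prod_range_succ, G.prod_betAt_congr (fun _ _ => rfl) (hX _), betAt,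
    G.state_congr (fun _ _ => rfl) (hX _), Function.update_self, ← mul_sum, G.bet_sum, mul_one]

theorem exists_succeeds_of_FSG_succeeds {G : FSG α m} {s : ℝ} {X : ℕ → α}
    (hG : G.Succeeds s X) (Y : ℕ → β) :
    ∃ (ℓ' m' : ℕ) (G' : FSRG α β ℓ' m'), G'.Succeeds s Y X := by
  let G' : FSRG α β 0 m :=
    ⟨fun q _ => G.δ q, fun q _ => G.bet q, fun q _ => G.bet_nonneg q, fun q _ => G.bet_sum q, G.q₀⟩
  have hstate : ∀ n, G'.state Y X n = G.state X n := by
    intro n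
    induction n with
    | zero => rfl
    | succ n ih => simp only [state, FSG.state, ih]; rfl
  refine ⟨0, m, G', fun C => ?_⟩
  obtain ⟨n, hn⟩ := hG C
  refine ⟨n, ?_⟩
  rw [capital_eq_prod]
  rw [FSG.capital_eq_prod] at hn
  simpa only [betAt, hstate] using hn

end FSRG

end Gamblers

theorem Nat.succ_mod_div_cases {L : ℕ} (hL : 0 < L) (n : ℕ) :
    ((n + 1) % L = n % L + 1 ∧ (n + 1) / L = n / L) ∨
      ((n + 1) % L = 0 ∧ (n + 1) / L = n / L + 1 ∧ n % L + 1 = L) := by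
  have hn : n + 1 = L * (n / L) + (n % L + 1) := by rw [← Nat.add_assoc, Nat.div_add_mod]
  rcases Nat.lt_or_ge (n % L + 1) L with h | h
  · left
    rw [hn, Nat.mul_add_mod, Nat.mul_add_div hL, Nat.mod_eq_of_lt h, Nat.div_eq_of_lt h]
    simp
  · right
    replace h : n % L + 1 = L := le_antisymm (Nat.mod_lt n hL) h
    rw [hn, h, ← Nat.mul_succ, Nat.mul_mod_right, Nat.mul_div_cancel_left _ hL]
    exact ⟨rfl, rfl, rfl⟩

theorem Finset.prod_range_div_telescope {L : ℕ} (hL : 0 < L) (f : ℕ → ℕ → ℚ) (w₀ : ℚ)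
    (hf₀ : ∀ b, f b 0 = w₀) (hf : ∀ b, ∀ r < L, f b r ≠ 0) (n : ℕ) :
    ∏ i ∈ range n, f (i / L) (i % L + 1) / f (i / L) (i % L) =
      (∏ b ∈ range (n / L), f b L) * f (n / L) (n % L) / w₀ ^ (n / L + 1) := by
  have hw₀ : w₀ ≠ 0 := hf₀ 0 ▸ hf 0 0 hL
  induction n with
  | zero => simp [hf₀, hw₀]
  | succ n ih =>
    have hfn := hf (n / L) (n % L) (Nat.mod_lt n hL)
    rw [prod_range_succ, ih]
    rcases Nat.succ_mod_div_cases hL n with ⟨hmod, hdiv⟩ | ⟨hmod, hdiv, hlast⟩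
    · rw [hmod, hdiv]
      field_simp
    · rw [hmod, hdiv, hf₀, prod_range_succ, hlast, pow_succ]
      field_simp
      ring

section BlockGambler

variable {α : Type}

/-- Cylinder weights of a (not necessarily normalized) measure on words of length `L`:
`weight r σ` is the weight of the cylinder fixed by `σ` below `r`. -/
structure CylinderWeight (α : Type) [Fintype α] (L : ℕ) where
  weight : ℕ → (ℕ → α) → ℚ
  weight_congr : ∀ r σ σ', (∀ p < r, σ p = σ' p) → weight r σ = weight r σ'
  weight_nonneg : ∀ r σ, 0 ≤ weight r σ
  sum_weight_update : ∀ r < L, ∀ σ, ∑ a, weight (r + 1) (Function.update σ r a) = weight r σ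

namespace CylinderWeight

def block (L : ℕ) (X : ℕ → α) (b : ℕ) : ℕ → α := fun p => X (L * b + p)

theorem block_mul_eq {d : ℕ} (X : ℕ → α) (J b : ℕ) :
    block (J * d) X b = fun p => X (b * J * d + p) := by
  funext p; simp only [block]; ring_nf

variable {L : ℕ} [Nonempty α]

noncomputable def bufferSeq (buf : Fin L → α) : ℕ → α :=
  fun p => if h : p < L then buf ⟨p, h⟩ else Classical.arbitrary α

def automatonStep (hL : 0 < L) (st : Fin L × (Fin L → α)) (a : α) : Fin L × (Fin L → α) :=
  (⟨(st.1.val + 1) % L, Nat.mod_lt _ hL⟩, Function.update st.2 st.1 a)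

noncomputable def automatonStart (hL : 0 < L) : Fin L × (Fin L → α) :=
  (⟨0, hL⟩, fun _ => Classical.arbitrary α)

theorem run_automatonStep (hL : 0 < L) (X : ℕ → α) (n : ℕ) :
    (FSG.run (automatonStep hL) (automatonStart hL) X n).1.val = n % L ∧
      ∀ p < n % L, bufferSeq (FSG.run (automatonStep hL) (automatonStart hL) X n).2 p =
        block L X (n / L) p := by
  induction n with
  | zero => simp [FSG.run, automatonStart]
  | succ n ih =>
    obtain ⟨hpos, hbuf⟩ := ih
    simp only [FSG.run, automatonStep, hpos, Nat.mod_add_mod, true_and]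
    rcases Nat.succ_mod_div_cases hL n with ⟨hmod, hdiv⟩ | ⟨hmod, _, _⟩
    · intro p hp
      rw [hmod] at hp
      have hpL : p < L := by have := Nat.mod_lt (n + 1) hL; omega
      rw [hdiv]
      rcases (Nat.lt_succ_iff.mp hp).lt_or_eq with hlt | rfl
      · rw [← hbuf p hlt]
        simp [bufferSeq, hpL, Fin.ext_iff, hpos, hlt.ne]
      · have hst : (FSG.run (automatonStep hL) (automatonStart hL) X n).1 = ⟨n % L, hpL⟩ :=
          Fin.ext hpos
        simp [bufferSeq, hpL, block, hst, Nat.div_add_mod]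
    · simp [hmod]

variable [Fintype α] (μ : CylinderWeight α L)

/-- The gambler that stores the current block of length `L` and bets the conditional
probabilities of `μ` (uniformly where the conditioning cylinder is null). -/
noncomputable def automatonBet (st : Fin L × (Fin L → α)) (a : α) : ℚ :=
  if μ.weight st.1 (bufferSeq st.2) = 0 then (Fintype.card α : ℚ)⁻¹
  else μ.weight (st.1 + 1) (Function.update (bufferSeq st.2) st.1 a) /
    μ.weight st.1 (bufferSeq st.2)

theorem automatonBet_nonneg (st : Fin L × (Fin L → α)) (a : α) : 0 ≤ μ.automatonBet st a := by
  unfold automatonBet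
  split_ifs
  · positivity
  · exact div_nonneg (μ.weight_nonneg _ _) (μ.weight_nonneg _ _)

theorem sum_automatonBet (st : Fin L × (Fin L → α)) : ∑ a, μ.automatonBet st a = 1 := by
  unfold automatonBet
  split_ifs with h
  · simp
  · rw [← sum_div, μ.sum_weight_update _ st.1.isLt, div_self h]

theorem automatonBet_run (hL : 0 < L) (X : ℕ → α) (hX : ∀ b, ∀ r < L, 0 < μ.weight r (block L X b))
    (n : ℕ) :
    μ.automatonBet (FSG.run (automatonStep hL) (automatonStart hL) X n) (X n) =
      μ.weight (n % L + 1) (block L X (n / L)) / μ.weight (n % L) (block L X (n / L)) := by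
  obtain ⟨hpos, hbuf⟩ := run_automatonStep hL X n
  have hcur : μ.weight (n % L) (bufferSeq (FSG.run (automatonStep hL) (automatonStart hL) X n).2)
      = μ.weight (n % L) (block L X (n / L)) := μ.weight_congr _ _ _ hbuf
  have hnext : μ.weight (n % L + 1) (Function.update
      (bufferSeq (FSG.run (automatonStep hL) (automatonStart hL) X n).2) (n % L) (X n))
      = μ.weight (n % L + 1) (block L X (n / L)) := by
    refine μ.weight_congr _ _ _ fun p hp => ?_
    rcases (Nat.lt_succ_iff.mp hp).lt_or_eq with hlt | rfl
    · rw [Function.update_of_ne hlt.ne, hbuf p hlt]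
    · rw [Function.update_self, block, Nat.div_add_mod]
  rw [automatonBet, hpos, hcur, hnext, if_neg (hX _ _ (Nat.mod_lt n hL)).ne']

theorem exists_FSG_capital_eq (hL : 0 < L) : ∃ (m : ℕ) (G : FSG α m), ∀ s X,
    (∀ b, ∀ r < L, 0 < μ.weight r (block L X b)) → ∀ n, G.capital s X n =
      ((Fintype.card α : ℝ) ^ s) ^ n *
        (((∏ b ∈ range (n / L), μ.weight L (block L X b)) * μ.weight (n % L) (block L X (n / L)) /
          μ.weight 0 X ^ (n / L + 1) : ℚ) : ℝ) := by
  obtain ⟨m, G, hG⟩ := FSG.exists_capital_eq_of_automaton (automatonStep hL) μ.automatonBet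
    (automatonStart hL) μ.automatonBet_nonneg μ.sum_automatonBet
  refine ⟨m, G, fun s X hX n => ?_⟩
  rw [hG, ← prod_range_div_telescope hL (fun b r => μ.weight r (block L X b)) (μ.weight 0 X)
    (fun b => μ.weight_congr _ _ _ fun p hp => absurd hp p.not_lt_zero)
    (fun b r hr => (hX b r hr).ne'), Rat.cast_prod]
  simp only [μ.automatonBet_run hL X hX]

end CylinderWeight

end BlockGambler

section ArithmeticProgression

variable {α : Type} {d : ℕ}

theorem AP_shift (X : ℕ → α) (a M : ℕ) :
    AP (fun p => X (M * d + p)) d a = fun n => AP X d a (M + n) := by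
  funext n; simp only [AP]; ring_nf

theorem AP_update_of_eq (hd : 0 < d) (X : ℕ → α) {a N p : ℕ} (hp : a + N * d = p) (x : α) :
    AP (Function.update X p x) d a = Function.update (AP X d a) N x := by
  subst hp
  funext n
  rcases eq_or_ne n N with rfl | hn
  · simp [AP]
  · have : a + n * d ≠ a + N * d := fun h => hn (Nat.eq_of_mul_eq_mul_right hd (by omega))
    simp [AP, Function.update_of_ne this, Function.update_of_ne hn]

theorem AP_update_of_mod_ne (X : ℕ → α) {a p : ℕ} (ha : a < d) (h : a ≠ p % d) (x : α) :
    AP (Function.update X p x) d a = AP X d a := by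
  funext n
  refine Function.update_of_ne (fun hp => h ?_) _ _
  rw [← hp, Nat.add_mul_mod_self_right, Nat.mod_eq_of_lt ha]

theorem AP_eq_of_eqOn {X X' : ℕ → α} {K : ℕ} (h : ∀ p < K * d, X p = X' p) {a i : ℕ}
    (ha : a < d) (hi : i < K) : AP X d a i = AP X' d a i :=
  h _ (by nlinarith)

variable (j : Fin d)

def otherAPs (X : ℕ → α) : ℕ → ({k : Fin d // k ≠ j} → α) := prodSeq fun k => AP X d k

theorem otherAPs_shift (X : ℕ → α) (M : ℕ) :
    otherAPs j (fun p => X (M * d + p)) = fun n => otherAPs j X (M + n) := by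
  funext n k; simp only [otherAPs, prodSeq, AP_shift]

theorem otherAPs_update_of_modEq (X : ℕ → α) {p : ℕ} (hp : p ≡ j [MOD d]) (x : α) :
    otherAPs j (Function.update X p x) = otherAPs j X := by
  funext n k
  refine congrFun (AP_update_of_mod_ne X (k : Fin d).isLt (fun h => k.2 (Fin.ext ?_)) x) n
  rw [h, hp, Nat.mod_eq_of_lt j.isLt]

theorem otherAPs_eq_of_eqOn {X X' : ℕ → α} {K : ℕ} (h : ∀ p < K * d, X p = X' p) {i : ℕ}
    (hi : i < K) : otherAPs j X i = otherAPs j X' i :=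
  funext fun k => AP_eq_of_eqOn h (k : Fin d).isLt hi

end ArithmeticProgression

theorem Nat.count_modEq_of_modEq {d j r : ℕ} (hj : j < d) (h : r ≡ j [MOD d]) :
    r.count (· ≡ j [MOD d]) = r / d := by
  rw [Nat.count_modEq_card _ (by omega)]
  simp_all [Nat.ModEq]

theorem Nat.count_modEq_mul {d j : ℕ} (hj : j < d) (K : ℕ) :
    (K * d).count (· ≡ j [MOD d]) = K := by
  rw [Nat.count_modEq_card _ (by omega)]
  simp [Nat.mul_div_cancel _ (show 0 < d by omega)]

theorem Fintype.sum_sum_update {α ι : Type} [Fintype α] [Fintype ι] [DecidableEq ι]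
    (f : (ι → α) → ℚ) (i : ι) :
    ∑ a, ∑ z, f (Function.update z i a) = Fintype.card α * ∑ z, f z := by
  let e : (ι → α) × α ≃ (ι → α) × α :=
    { toFun := fun za => (Function.update za.1 i za.2, za.1 i)
      invFun := fun zb => (Function.update zb.1 i zb.2, zb.1 i)
      left_inv := fun za => by simp
      right_inv := fun zb => by simp }
  rw [sum_comm, ← Fintype.sum_prod_type',
    Fintype.sum_equiv e (fun za => f (Function.update za.1 i za.2)) (fun zb => f zb.1) fun _ => rfl,
    Fintype.sum_prod_type]
  simp [mul_sum]

theorem Finset.prod_range_mul_add {M : Type} [CommMonoid M] (f : ℕ → M) (J b r : ℕ) :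
    ∏ i ∈ range (b * J + r), f i =
      (∏ b' ∈ range b, ∏ i ∈ range J, f (b' * J + i)) * ∏ i ∈ range r, f (b * J + i) := by
  rw [prod_range_add]
  congr 1
  induction b with
  | zero => simp
  | succ b ih => rw [Nat.succ_mul, prod_range_add, ih, prod_range_succ]

theorem pow_mul_pow_le_of_surplus {c s t K : ℝ} {d J b N : ℕ} (hc : 1 ≤ c)
    (hst : s + d - 1 ≤ t * d) (hK₀ : 0 ≤ K) (hK : K ≤ (c ^ (t * d + 1 - s - d)) ^ J)
    (hbN : b * J ≤ N) :
    (c ^ s) ^ N * (K * c ^ (J * d)) ^ b ≤ (c ^ t) ^ (N * d) * c ^ N := by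
  set u := c ^ (t * d + 1 - s - d)
  have hc₀ : 0 < c := one_pos.trans_le hc
  have hu : 1 ≤ u := Real.one_le_rpow hc (by linarith)
  have hsplit : (c ^ t) ^ d * c = c ^ s * (c ^ d * u) := by
    rw [← Real.rpow_natCast, ← Real.rpow_mul hc₀.le, ← Real.rpow_natCast c d, ← Real.rpow_add hc₀,
      ← Real.rpow_add hc₀, ← Real.rpow_add_one hc₀.ne']
    ring_nf
  have hgrowth : (K * c ^ (J * d)) ^ b ≤ (c ^ d * u) ^ N :=
    calc (K * c ^ (J * d)) ^ b ≤ (u ^ J * c ^ (J * d)) ^ b := by gcongr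
      _ = (c ^ d * u) ^ (b * J) := by ring
      _ ≤ (c ^ d * u) ^ N := pow_le_pow_right₀ (one_le_mul_of_one_le_of_one_le
          (one_le_pow₀ hc) hu) hbN
  calc (c ^ s) ^ N * (K * c ^ (J * d)) ^ b ≤ (c ^ s) ^ N * (c ^ d * u) ^ N := by gcongr
    _ = (c ^ t) ^ (N * d) * c ^ N := by rw [← mul_pow, ← hsplit, mul_pow, ← pow_mul, mul_comm d]

section Mixture

variable {α : Type} [Nonempty α]

noncomputable def splice (r : ℕ) (σ : ℕ → α) {E : ℕ} (z : Fin E → α) : ℕ → α :=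
  fun p => if p < r then σ p else if h : p < E then z ⟨p, h⟩ else Classical.arbitrary α

theorem splice_congr {r : ℕ} {σ σ' : ℕ → α} (h : ∀ p < r, σ p = σ' p) {E : ℕ} (z : Fin E → α) :
    splice r σ z = splice r σ' z := by
  funext p
  by_cases hp : p < r <;> simp [splice, hp, h]

theorem splice_succ_update (r : ℕ) (σ : ℕ → α) {E : ℕ} (z : Fin E → α) (a : α) :
    splice (r + 1) (Function.update σ r a) z = Function.update (splice r σ z) r a := by
  funext p
  rcases lt_trichotomy p r with hp | rfl | hp
  · simp [splice, hp, hp.ne, Nat.lt_succ_of_lt hp]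
  · simp [splice]
  · simp [splice, hp.ne', hp.not_gt, (Nat.succ_le_of_lt hp).not_gt]

theorem update_splice {r E : ℕ} (hr : r < E) (σ : ℕ → α) (z : Fin E → α) (a : α) :
    Function.update (splice r σ z) r a = splice r σ (Function.update z ⟨r, hr⟩ a) := by
  funext p
  rcases eq_or_ne p r with rfl | hp
  · simp [splice, hr]
  · simp only [splice, Function.update_of_ne hp]
    split_ifs <;> simp [Fin.ext_iff, hp]

theorem splice_eq_of_lt {r E : ℕ} {σ : ℕ → α} {z : Fin E → α}
    (hz : ∀ p (hp : p < E), r ≤ p → z ⟨p, hp⟩ = σ p) {p : ℕ} (hp : p < E) :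
    splice r σ z p = σ p := by
  unfold splice
  split_ifs with hpr
  · rfl
  · exact hz p hp (not_lt.mp hpr)

variable [Fintype α] {d ℓ m : ℕ} (j : Fin d) (G : FSRG α ({k : Fin d // k ≠ j} → α) ℓ m)

/-- The product of `G`'s bets at the betting positions (`≡ j mod d`) below `r`, summed over
`G`'s initial state and over the symbols `z` at the positions in `[r, E)`, not yet read. -/
noncomputable def mixtureWeight (E r : ℕ) (σ : ℕ → α) : ℚ :=
  ∑ q, ∑ z : Fin E → α, ∏ i ∈ range (r.count (· ≡ j [MOD d])),
    (G.restart q).betAt (otherAPs j (splice r σ z)) (AP (splice r σ z) d j) i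

theorem mixtureWeight_nonneg (E r : ℕ) (σ : ℕ → α) : 0 ≤ mixtureWeight j G E r σ :=
  sum_nonneg fun _ _ => sum_nonneg fun _ _ => prod_nonneg fun _ _ => FSRG.betAt_nonneg _ _ _ _

theorem mixtureWeight_zero (E : ℕ) (σ : ℕ → α) :
    mixtureWeight j G E 0 σ = (m + 1) * Fintype.card α ^ E := by
  simp [mixtureWeight]

theorem sum_mixtureWeight_update {E r : ℕ} (hr : r < E) (σ : ℕ → α) :
    ∑ a, mixtureWeight j G E (r + 1) (Function.update σ r a) =
      (if r ≡ j [MOD d] then 1 else (Fintype.card α : ℚ)) * mixtureWeight j G E r σ := by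
  unfold mixtureWeight
  simp_rw [splice_succ_update, Nat.count_succ]
  split_ifs with hbet
  · have hpos : j + r.count (· ≡ j [MOD d]) * d = r := by
      rw [Nat.count_modEq_of_modEq j.isLt hbet, ← Nat.mod_eq_of_lt j.isLt, ← hbet,
        Nat.mod_add_div']
    simp_rw [otherAPs_update_of_modEq j _ hbet, AP_update_of_eq j.pos _ hpos, one_mul]
    rw [sum_comm]
    refine sum_congr rfl fun q _ => ?_
    rw [sum_comm]
    refine sum_congr rfl fun z _ => ?_
    exact FSRG.sum_prod_betAt_update _ _ _ _
  · simp_rw [add_zero, update_splice hr]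
    rw [mul_sum, sum_comm]
    exact sum_congr rfl fun q _ =>
      Fintype.sum_sum_update (fun z => ∏ i ∈ range (r.count (· ≡ j [MOD d])),
        (G.restart q).betAt (otherAPs j (splice r σ z)) (AP (splice r σ z) d j) i) _

theorem mixtureWeight_ge {J r : ℕ} (hr : r ≤ J * d) (τ : ℕ → α) (q : Fin (m + 1)) :
    Fintype.card α ^ r * ∏ i ∈ range (r.count (· ≡ j [MOD d])),
      (G.restart q).betAt (otherAPs j τ) (AP τ d j) i ≤ mixtureWeight j G ((J + ℓ) * d) r τ := by
  have hrE : r ≤ (J + ℓ) * d := hr.trans (Nat.mul_le_mul_right d (Nat.le_add_right J ℓ))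
  have hN : r.count (· ≡ j [MOD d]) ≤ J :=
    (Nat.count_monotone _ hr).trans_eq (Nat.count_modEq_mul j.isLt J)
  classical
  let fill : (Fin r → α) → Fin ((J + ℓ) * d) → α := fun g p =>
    if h : p.val < r then g ⟨p, h⟩ else τ p
  have hfill_inj : Function.Injective fill := fun g g' h => funext fun p => by
    simpa [fill] using congrFun h ⟨p, p.2.trans_le hrE⟩
  let F : Fin (m + 1) → (Fin ((J + ℓ) * d) → α) → ℚ := fun q z =>
    ∏ i ∈ range (r.count (· ≡ j [MOD d])),
      (G.restart q).betAt (otherAPs j (splice r τ z)) (AP (splice r τ z) d j) i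
  have hF : ∀ q z, 0 ≤ F q z := fun _ _ => prod_nonneg fun _ _ => FSRG.betAt_nonneg _ _ _ _
  have hfill : ∀ g, F q (fill g) =
      ∏ i ∈ range (r.count (· ≡ j [MOD d])), (G.restart q).betAt (otherAPs j τ) (AP τ d j) i := by
    intro g
    have hsp : ∀ p < (J + ℓ) * d, splice r τ (fill g) p = τ p := fun p =>
      splice_eq_of_lt fun p hp hrp => by simp [fill, hrp]
    exact FSRG.prod_betAt_congr _ (fun i hi => otherAPs_eq_of_eqOn j hsp (by omega))
      (fun i hi => AP_eq_of_eqOn hsp j.isLt (by omega))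
  calc _ = ∑ g, F q (fill g) := by simp [hfill]
    _ = ∑ z ∈ univ.image fill, F q z := (sum_image fun g _ g' _ h => hfill_inj h).symm
    _ ≤ ∑ z, F q z := sum_le_univ_sum_of_nonneg (hF q)
    _ ≤ ∑ q', ∑ z, F q' z :=
      single_le_sum (f := fun q' => ∑ z, F q' z) (fun _ _ => sum_nonneg fun _ _ => hF _ _)
        (mem_univ q)

/-- Up to the factor `(m + 1) c ^ E` (`c = |α|`, `E = (J + ℓ) d`), the probability of the
cylinder `σ[0, r)` when the positions `≢ j (mod d)` are uniform and the others follow `G`'s bets,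
averaged over its initial state. The factor `c ^ (count - r)` compensates for the sum over `z` in
`mixtureWeight` also running over the ignored values below `r`. -/
noncomputable def cylinderWeight (J : ℕ) : CylinderWeight α (J * d) where
  weight r σ := Fintype.card α ^ r.count (· ≡ j [MOD d]) * mixtureWeight j G ((J + ℓ) * d) r σ /
    Fintype.card α ^ r
  weight_congr r σ σ' h := by simp only [mixtureWeight, splice_congr h]
  weight_nonneg r σ := by have := mixtureWeight_nonneg j G ((J + ℓ) * d) r σ; positivity
  sum_weight_update r hr σ := by
    have hrE : r < (J + ℓ) * d := hr.trans_le (Nat.mul_le_mul_right d (Nat.le_add_right J ℓ))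
    have hc : (Fintype.card α : ℚ) ≠ 0 := by simp
    rw [← sum_div, ← mul_sum, sum_mixtureWeight_update j G hrE, Nat.count_succ]
    split_ifs <;> field_simp <;> ring

theorem cylinderWeight_block_ge (X : ℕ → α) {J r : ℕ} (hr : r ≤ J * d) (b : ℕ) :
    ∏ i ∈ range (r.count (· ≡ j [MOD d])),
        (Fintype.card α * G.betAt (otherAPs j X) (AP X d j) (b * J + i)) ≤
      (cylinderWeight j G J).weight r (CylinderWeight.block (J * d) X b) := by
  have hshift : ∀ i, G.betAt (otherAPs j X) (AP X d j) (b * J + i) =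
      (G.restart (G.state (otherAPs j X) (AP X d j) (b * J))).betAt
        (otherAPs j (CylinderWeight.block (J * d) X b))
        (AP (CylinderWeight.block (J * d) X b) d j) i := by
    intro i
    rw [FSRG.betAt_add, CylinderWeight.block_mul_eq, otherAPs_shift, AP_shift]
  simp only [hshift, prod_mul_distrib, prod_const, card_range]
  have hmix := mixtureWeight_ge j G hr (CylinderWeight.block (J * d) X b)
    (G.state (otherAPs j X) (AP X d j) (b * J))
  show _ ≤ _ * _ / _
  rw [le_div_iff₀ (by positivity), mul_right_comm, mul_assoc]
  gcongr

theorem prod_betAt_le_prod_cylinderWeight (X : ℕ → α) {J : ℕ} (hJ : 0 < J) (N : ℕ) :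
    ∏ i ∈ range N, (Fintype.card α * G.betAt (otherAPs j X) (AP X d j) i) ≤
      (∏ b ∈ range (N / J),
          (cylinderWeight j G J).weight (J * d) (CylinderWeight.block (J * d) X b)) *
        (cylinderWeight j G J).weight (N % J * d) (CylinderWeight.block (J * d) X (N / J)) := by
  have hge : ∀ {K}, K ≤ J → ∀ b, ∏ i ∈ range K,
      (Fintype.card α * G.betAt (otherAPs j X) (AP X d j) (b * J + i)) ≤
        (cylinderWeight j G J).weight (K * d) (CylinderWeight.block (J * d) X b) :=
    fun {K} hK b => by
      simpa only [Nat.count_modEq_mul j.isLt K] using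
        cylinderWeight_block_ge j G X (Nat.mul_le_mul_right d hK) b
  have hnonneg : ∀ i, 0 ≤ (Fintype.card α * G.betAt (otherAPs j X) (AP X d j) i : ℚ) :=
    fun i => mul_nonneg (by positivity) (FSRG.betAt_nonneg _ _ _ _)
  conv_lhs => rw [← Nat.div_add_mod' N J, prod_range_mul_add]
  exact mul_le_mul (prod_le_prod (fun _ _ => prod_nonneg fun _ _ => hnonneg _)
      fun b _ => hge le_rfl b) (hge (Nat.mod_lt N hJ).le _)
    (prod_nonneg fun _ _ => hnonneg _) (prod_nonneg fun _ _ => CylinderWeight.weight_nonneg _ _ _)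

theorem exists_FSG_capital_ge (X : ℕ → α) {s t : ℝ}
    (hβ : ∀ i, 0 < G.betAt (otherAPs j X) (AP X d j) i) (ht : s + d - 1 ≤ t * d) {J : ℕ}
    (hJ : 0 < J) (hK : (m + 1) * (Fintype.card α : ℝ) ^ (ℓ * d) ≤
      ((Fintype.card α : ℝ) ^ (t * d + 1 - s - d)) ^ J) :
    ∃ (m' : ℕ) (G' : FSG α m'), ∀ N, G.capital s (otherAPs j X) (AP X d j) N ≤
      (m + 1) * (Fintype.card α : ℝ) ^ ((J + ℓ) * d) * G'.capital t X (N * d) := by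
  set c : ℝ := (Fintype.card α : ℝ)
  set w₀ : ℝ := (m + 1) * c ^ ((J + ℓ) * d)
  have hc : 1 ≤ c := by simp only [c]; exact_mod_cast Fintype.card_pos
  obtain ⟨m', G', hG'⟩ := (cylinderWeight j G J).exists_FSG_capital_eq (Nat.mul_pos hJ j.pos)
  have hpos : ∀ b, ∀ r < J * d,
      0 < (cylinderWeight j G J).weight r (CylinderWeight.block (J * d) X b) :=
    fun b r hr => (prod_pos fun i _ => mul_pos (by positivity) (hβ _)).trans_le
      (cylinderWeight_block_ge j G X hr.le b)
  have hw₀ : ((cylinderWeight j G J).weight 0 X : ℝ) = w₀ := by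
    simp [cylinderWeight, mixtureWeight_zero, w₀, c]
  refine ⟨m', G', fun N => ?_⟩
  have hsurplus := pow_mul_pow_le_of_surplus hc ht (by positivity) hK (Nat.div_mul_le_self N J)
  rw [show (m + 1) * c ^ (ℓ * d) * c ^ (J * d) = w₀ by simp only [w₀]; ring] at hsurplus
  have hW := (Rat.cast_le (K := ℝ)).mpr (prod_betAt_le_prod_cylinderWeight j G X hJ N)
  push_cast [prod_mul_distrib, prod_const, card_range] at hW
  rw [FSRG.capital_eq_prod, hG' t X hpos, Nat.mul_div_mul_right _ _ j.pos,
    Nat.mul_mod_mul_right, Rat.cast_div, Rat.cast_pow, hw₀, mul_div_assoc', mul_div_assoc',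
    le_div_iff₀ (by positivity), pow_succ]
  set P : ℝ := ∏ i ∈ range N, (G.betAt (otherAPs j X) (AP X d j) i : ℝ)
  have hP : 0 ≤ P := prod_nonneg fun i _ => by exact_mod_cast (hβ i).le
  calc (c ^ s) ^ N * P * (w₀ ^ (N / J) * w₀) = (c ^ s) ^ N * w₀ ^ (N / J) * P * w₀ := by ring
    _ ≤ (c ^ t) ^ (N * d) * c ^ N * P * w₀ := by gcongr
    _ = w₀ * ((c ^ t) ^ (N * d) * (c ^ N * P)) := by ring
    _ ≤ _ := by push_cast; gcongr

end Mixture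

theorem exists_FSG_succeeds_of_FSRG_succeeds {α : Type} [Fintype α] {d ℓ m : ℕ} (j : Fin d)
    (G : FSRG α ({k : Fin d // k ≠ j} → α) ℓ m) (hα : 2 ≤ Fintype.card α) {X : ℕ → α} {s t : ℝ}
    (hG : G.Succeeds s (otherAPs j X) (AP X d j)) (ht : s + d - 1 < t * d) :
    ∃ (m' : ℕ) (G' : FSG α m'), G'.Succeeds t X := by
  have : Nonempty α := Fintype.card_pos_iff.mp (by omega)
  have hc : (1 : ℝ) < Fintype.card α := by exact_mod_cast hα
  have hu : 1 < (Fintype.card α : ℝ) ^ (t * d + 1 - s - d) := Real.one_lt_rpow hc (by linarith)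
  obtain ⟨J, hJ⟩ := pow_unbounded_of_one_lt ((m + 1) * (Fintype.card α : ℝ) ^ (ℓ * d)) hu
  obtain ⟨m', G', hG'⟩ := exists_FSG_capital_ge j G X (FSRG.betAt_pos_of_succeeds hG) ht.le
    J.succ_pos (hJ.le.trans (pow_le_pow_right₀ hu.le J.le_succ))
  refine ⟨m', G', fun C => ?_⟩
  obtain ⟨N, hN⟩ := hG ((m + 1) * (Fintype.card α : ℝ) ^ ((J + 1 + ℓ) * d) * C)
  exact ⟨N * d, (mul_lt_mul_iff_right₀ (by positivity)).mp (hN.trans_le (hG' N))⟩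

theorem AP_relative_dim_bounds_general {α : Type} [Fintype α] (hα : 2 ≤ Fintype.card α)
    (X : ℕ → α) (d : ℕ) (j : Fin d) :
    dimFSRelFam (AP X d j.val) (fun k : {k : Fin d // k ≠ j} => AP X d (k : Fin d).val)
        ≤ dimFS (AP X d j.val) ∧
    (d : ℝ) * (dimFS X - ((d : ℝ) - 1) / d) ≤
      dimFSRelFam (AP X d j.val)
        (fun k : {k : Fin d // k ≠ j} => AP X d (k : Fin d).val) := by
  have hd : (1 : ℝ) ≤ d := by exact_mod_cast j.pos
  have hbdd : BddBelow {s : ℝ | 0 ≤ s ∧ ∃ (ℓ m : ℕ) (G : FSRG α _ ℓ m),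
      G.Succeeds s (otherAPs j X) (AP X d j)} := ⟨0, fun _ h => h.1⟩
  have hsub : {s : ℝ | 0 ≤ s ∧ ∃ (m : ℕ) (G : FSG α m), G.Succeeds s (AP X d j)} ⊆
      {s : ℝ | 0 ≤ s ∧ ∃ (ℓ m : ℕ) (G : FSRG α _ ℓ m), G.Succeeds s (otherAPs j X) (AP X d j)} :=
    fun s ⟨hs, _, _, hG⟩ => ⟨hs, FSRG.exists_succeeds_of_FSG_succeeds hG _⟩
  have hne : {s : ℝ | 0 ≤ s ∧ ∃ (m : ℕ) (G : FSG α m), G.Succeeds s (AP X d j)}.Nonempty :=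
    ⟨2, zero_le_two, FSG.exists_succeeds_two hα _⟩
  refine ⟨csInf_le_csInf hbdd hne hsub, le_csInf (hne.mono hsub) ?_⟩
  rintro s ⟨hs, ℓ, m, G, hG⟩
  have hX : dimFS X ≤ (s + d - 1) / d := le_of_forall_gt_imp_ge_of_dense fun t ht =>
    csInf_le ⟨0, fun _ h => h.1⟩ ⟨(div_nonneg (by linarith) (by linarith)).trans ht.le,
      exists_FSG_succeeds_of_FSRG_succeeds j G hα hG ((div_lt_iff₀ (by linarith)).mp ht)⟩
  rw [le_div_iff₀ (by linarith)] at hX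
  rw [mul_sub, mul_div_cancel₀ _ (by linarith)]
  linarith

/-- `dim_FS(A_{d,j}) ≥ dim_FS^{{A_{d,k} : k ≠ j}}(A_{d,j}) ≥ d(dim_FS(X) − (d−1)/d)`. -/
theorem AP_relative_dim_bounds {α : Type} [Fintype α] (hα : 2 ≤ Fintype.card α)
    (X : ℕ → α) (d : ℕ) (hd : 0 < d) (j : Fin d) :
    dimFSRelFam (AP X d j.val) (fun k : {k : Fin d // k ≠ j} => AP X d (k : Fin d).val)
        ≤ dimFS (AP X d j.val) ∧
    (d : ℝ) * (dimFS X - ((d : ℝ) - 1) / d) ≤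
      dimFSRelFam (AP X d j.val)
        (fun k : {k : Fin d // k ≠ j} => AP X d (k : Fin d).val) :=
  AP_relative_dim_bounds_general hα X d j
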